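/- arXiv:1002.0241 — 10 statements merged into one kernel-verified Lean document; each statement's English description precedes it below -/
import Mathlib

section
/- The 4×4 matrix with entries Ginv^{jk} := (1 − 3δ_{jk})·y_j y_k/(3G) (no summation) is a two-sided inverse of the matrix with entries G_{ij} := (1 − δ_{ij})·G/(y_i y_j); that is, Σ_{j=1}^{4} G_{ij}·Ginv^{jk} = δ_i^k for all i, k ∈ {1,2,3,4}. -/
set_option maxHeartbeats 8000000

/-- The matrix `Ginv^{jk} = (1 − 3δ_{jk})·y_j y_k/(3G)` is a
two-sided inverse of the matrix `G_{ij} = (1 − δ_{ij})·G/(y_i y_j)`. -/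
theorem berwald_moor_inverse
    (y : Fin 4 → ℝ) (hy : ∀ i, y i ≠ 0)
    (G : ℝ) (hG : G = ∏ i, y i)
    (Gmat : Fin 4 → Fin 4 → ℝ)
    (hGmat : ∀ i j, Gmat i j =
      (1 - (if i = j then (1 : ℝ) else 0)) * G / (y i * y j))
    (Ginv : Fin 4 → Fin 4 → ℝ)
    (hGinv : ∀ j k, Ginv j k =
      (1 - 3 * (if j = k then (1 : ℝ) else 0)) * y j * y k / (3 * G)) :
    (∀ i k, ∑ j, Gmat i j * Ginv j k = if i = k then (1 : ℝ) else 0) ∧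
    (∀ i k, ∑ j, Ginv i j * Gmat j k = if i = k then (1 : ℝ) else 0) := by
  have h0 := hy 0; have h1 := hy 1; have h2 := hy 2; have h3 := hy 3
  rw [Fin.prod_univ_four] at hG
  subst hG
  constructor <;> intro i k <;> fin_cases i <;> fin_cases k <;>
    (simp only [Fin.sum_univ_four, hGmat, hGinv, Fin.isValue, Fin.reduceFinMk,
       Fin.reduceEq, if_true, if_false, reduceIte, mul_zero, zero_mul, mul_one,
       one_mul, sub_zero, zero_div, zero_add, add_zero];
     field_simp;
     ring)
end

section
/- For all i, j ∈ {1,2,3,4}: (1/(4√G))·[G_{ij} − G_i·G_j/(2G)] = (1 − 2δ_{ij})·√G/(8 y_i y_j) (no summation); i.e., the fundamental metrical d-tensor of the rheonomic Berwald–Moór metric equals g_{ij} = (1 − 2δ_{ij})·√G/(8 y_i y_j). -/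
/-! Since `G_i G_j / G = G / (y_i y_j)`, the bracket equals `(1/2 - δ_{ij}) G / (y_i y_j)`, and
`G / √G = √G` turns the prefactor `1 / (4√G)` into the claimed form. The identity is linear in
`δ_{ij}`, so no case split on `i = j` is needed. -/

theorem one_div_four_sqrt_mul_sub_eq (d : ℝ) {G a b : ℝ} (hG : 0 < G) (ha : a ≠ 0) (hb : b ≠ 0) :
    (1 / (4 * Real.sqrt G)) * ((1 - d) * G / (a * b) - G / a * (G / b) / (2 * G))
      = (1 - 2 * d) * Real.sqrt G / (8 * a * b) := by
  have hsqrt : Real.sqrt G * Real.sqrt G = G := Real.mul_self_sqrt hG.le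
  have hsqrt_ne : Real.sqrt G ≠ 0 := (Real.sqrt_pos.mpr hG).ne'
  field_simp
  linear_combination (16 * d - 8) * hsqrt

/-- For all `i, j`:
`(1/(4√G))·[G_{ij} − G_i·G_j/(2G)] = (1 − 2δ_{ij})·√G/(8 y_i y_j)`,
i.e. the fundamental metrical d-tensor of the rheonomic Berwald–Moór metric is
`g_{ij} = (1 − 2δ_{ij})·√G/(8 y_i y_j)`. -/
theorem berwald_moor_fundamental_tensor
    (y : Fin 4 → ℝ) (hy : ∀ i, 0 < y i)
    (G : ℝ) (hG : G = ∏ i, y i)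
    (Gi : Fin 4 → ℝ) (hGi : ∀ i, Gi i = G / y i)
    (Gij : Fin 4 → Fin 4 → ℝ)
    (hGij : ∀ i j, Gij i j =
      (1 - (if i = j then (1 : ℝ) else 0)) * G / (y i * y j)) :
    ∀ i j, (1 / (4 * Real.sqrt G)) * (Gij i j - Gi i * Gi j / (2 * G))
      = (1 - 2 * (if i = j then (1 : ℝ) else 0)) * Real.sqrt G / (8 * y i * y j) := by
  intro i j
  have hGpos : 0 < G := hG ▸ Finset.prod_pos fun k _ => hy k
  rw [hGij, hGi, hGi]
  exact one_div_four_sqrt_mul_sub_eq _ hGpos (hy i).ne' (hy j).ne'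
end

section
/- Let T : (Fin 4)⁴ → ℝ be totally symmetric (invariant under all permutations of its four indices) and y ∈ ℝ⁴. Define G₀ := Σ_{p,q,r,s} T_{pqrs} y^p y^q y^r y^s, G_i := 4·Σ_{p,q,r} T_{ipqr} y^p y^q y^r, and G_{ij} := 12·Σ_{p,q} T_{ijpq} y^p y^q. Assume G₀ > 0, the 4×4 matrix (G_{ij}) is invertible with inverse (Ginv^{jk}), and G₀ ≠ 𝒢₀, where 𝒢₀ is defined by 2𝒢₀ := Σ_{p,q} Ginv^{pq} G_p G_q. Set G^j := Σ_p Ginv^{jp} G_p. Then the matrices g_{ij} := (1/(4√G₀))·[G_{ij} − G_i G_j/(2G₀)] and ginv^{jk} := 4√G₀·[Ginv^{jk} + G^j G^k/(2(G₀ − 𝒢₀))] are mutually inverse: Σ_j g_{ij}·ginv^{jk} = δ_i^k for all i, k. -/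
/-- For a totally symmetric `(0,4)`-tensor `T` on `ℝ⁴` with
`G₀ = T(y,y,y,y) > 0`, `(G_{ij})` invertible and `G₀ ≠ 𝒢₀`, the matrices
`g_{ij} = (1/(4√G₀))·[G_{ij} − G_i G_j/(2G₀)]` and
`ginv^{jk} = 4√G₀·[Ginv^{jk} + G^j G^k/(2(G₀ − 𝒢₀))]` are mutually inverse. -/
theorem jet_lagrange_metric_inverse
    (T : Fin 4 → Fin 4 → Fin 4 → Fin 4 → ℝ)
    (hsymm1 : ∀ p q r s, T p q r s = T q p r s)
    (hsymm2 : ∀ p q r s, T p q r s = T p r q s)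
    (hsymm3 : ∀ p q r s, T p q r s = T p q s r)
    (y : Fin 4 → ℝ)
    (G0 : ℝ) (hG0 : G0 = ∑ p, ∑ q, ∑ r, ∑ s, T p q r s * y p * y q * y r * y s)
    (hG0pos : 0 < G0)
    (Gi : Fin 4 → ℝ)
    (hGi : ∀ i, Gi i = 4 * ∑ p, ∑ q, ∑ r, T i p q r * y p * y q * y r)
    (Gij : Fin 4 → Fin 4 → ℝ)
    (hGij : ∀ i j, Gij i j = 12 * ∑ p, ∑ q, T i j p q * y p * y q)
    (Ginv : Fin 4 → Fin 4 → ℝ)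
    (hinv1 : ∀ i k, ∑ j, Gij i j * Ginv j k = if i = k then (1 : ℝ) else 0)
    (hinv2 : ∀ i k, ∑ j, Ginv i j * Gij j k = if i = k then (1 : ℝ) else 0)
    (𝒢0 : ℝ) (h𝒢0 : 2 * 𝒢0 = ∑ p, ∑ q, Ginv p q * Gi p * Gi q)
    (hne : G0 ≠ 𝒢0)
    (Gup : Fin 4 → ℝ) (hGup : ∀ j, Gup j = ∑ p, Ginv j p * Gi p)
    (g : Fin 4 → Fin 4 → ℝ)
    (hg : ∀ i j, g i j =
      (1 / (4 * Real.sqrt G0)) * (Gij i j - Gi i * Gi j / (2 * G0)))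
    (ginv : Fin 4 → Fin 4 → ℝ)
    (hginv : ∀ j k, ginv j k =
      4 * Real.sqrt G0 * (Ginv j k + Gup j * Gup k / (2 * (G0 - 𝒢0)))) :
    (∀ i k, ∑ j, g i j * ginv j k = if i = k then (1 : ℝ) else 0) ∧
    (∀ i k, ∑ j, ginv i j * g j k = if i = k then (1 : ℝ) else 0) := by
  have hs : (0:ℝ) < Real.sqrt G0 := Real.sqrt_pos.mpr hG0pos
  have hG0ne : G0 ≠ 0 := ne_of_gt hG0pos
  have hDne : G0 - 𝒢0 ≠ 0 := sub_ne_zero.mpr hne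
  -- symmetry of Gij
  have hGijs : ∀ a b, Gij a b = Gij b a := by
    intro a b
    rw [hGij a b, hGij b a]
    congr 1
    exact Finset.sum_congr rfl fun p _ => Finset.sum_congr rfl fun q _ => by
      rw [hsymm1]
  -- Ginv is also a right inverse of the transpose
  have hright : ∀ j b, ∑ m, Gij j m * Ginv b m = if j = b then (1:ℝ) else 0 := by
    intro j b
    have h := hinv2 b j
    calc ∑ m, Gij j m * Ginv b m = ∑ m, Ginv b m * Gij m j := by
          exact Finset.sum_congr rfl fun m _ => by rw [hGijs j m]; ring
      _ = if b = j then (1:ℝ) else 0 := hinv2 b j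
      _ = if j = b then (1:ℝ) else 0 := by simp [eq_comm]
  -- symmetry of Ginv
  have hGinvs : ∀ a b, Ginv a b = Ginv b a := by
    intro a b
    have h1 : Ginv a b = ∑ j, Ginv a j * (if j = b then (1:ℝ) else 0) := by simp
    rw [h1]
    have h2 : ∀ j, Ginv a j * (if j = b then (1:ℝ) else 0)
        = ∑ m, Ginv a j * (Gij j m * Ginv b m) := by
      intro j; rw [← Finset.mul_sum, hright]
    simp_rw [h2]
    rw [Finset.sum_comm]
    have h3 : ∀ m, (∑ j, Ginv a j * (Gij j m * Ginv b m))
        = (∑ j, Ginv a j * Gij j m) * Ginv b m := by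
      intro m; rw [Finset.sum_mul]; exact Finset.sum_congr rfl fun j _ => by ring
    simp_rw [h3, hinv2]
    simp
  -- key contraction identities
  have L2 : ∀ i, ∑ j, Gij i j * Gup j = Gi i := by
    intro i
    have h2 : ∀ j, Gij i j * Gup j = ∑ p, Gij i j * Ginv j p * Gi p := by
      intro j; rw [hGup, Finset.mul_sum]
      exact Finset.sum_congr rfl fun p _ => by ring
    simp_rw [h2]
    rw [Finset.sum_comm]
    have h3 : ∀ p, (∑ j, Gij i j * Ginv j p * Gi p)
        = (∑ j, Gij i j * Ginv j p) * Gi p := by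
      intro p; rw [Finset.sum_mul]
    simp_rw [h3, hinv1]
    simp
  have L3 : ∀ k, ∑ j, Gi j * Ginv j k = Gup k := by
    intro k
    rw [hGup]
    exact Finset.sum_congr rfl fun j _ => by rw [hGinvs j k]; ring
  have L4 : ∑ j, Gi j * Gup j = 2 * 𝒢0 := by
    rw [h𝒢0]
    exact Finset.sum_congr rfl fun j _ => by
      rw [hGup, Finset.mul_sum]
      exact Finset.sum_congr rfl fun p _ => by ring
  -- first inverse identity
  have key : ∀ i k, ∑ j, g i j * ginv j k = if i = k then (1:ℝ) else 0 := by
    intro i k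
    have expand : ∀ j, g i j * ginv j k =
        Gij i j * Ginv j k
        + (Gij i j * Gup j) * (Gup k / (2*(G0 - 𝒢0)))
        - (Gi i/(2*G0)) * (Gi j * Ginv j k)
        - (Gi i * Gup k/(2*G0*(2*(G0 - 𝒢0)))) * (Gi j * Gup j) := by
      intro j
      rw [hg, hginv]
      field_simp
      ring
    simp_rw [expand]
    rw [Finset.sum_sub_distrib, Finset.sum_sub_distrib, Finset.sum_add_distrib,
      ← Finset.sum_mul, ← Finset.mul_sum, ← Finset.mul_sum,
      hinv1, L2, L3, L4]
    have hz : Gi i * (Gup k / (2*(G0 - 𝒢0))) - Gi i/(2*G0) * Gup k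
        - Gi i * Gup k/(2*G0*(2*(G0 - 𝒢0))) * (2*𝒢0) = 0 := by
      field_simp
      ring
    linarith [hz]
  -- symmetry of g and ginv
  have hgs : ∀ a b, g a b = g b a := by
    intro a b; rw [hg, hg, hGijs a b]; ring
  have hginvs : ∀ a b, ginv a b = ginv b a := by
    intro a b; rw [hginv, hginv, hGinvs a b]; ring
  refine ⟨key, fun i k => ?_⟩
  calc ∑ j, ginv i j * g j k = ∑ j, g k j * ginv j i := by
        exact Finset.sum_congr rfl fun j _ => by rw [hgs j k, hginvs i j]; ring
    _ = if k = i then (1:ℝ) else 0 := key k i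
    _ = if i = k then (1:ℝ) else 0 := by simp [eq_comm]
end

section
/- The d-tensor C^i_{jk} := A^i_{jk}·y_i/(y_j y_k) (no summation) satisfies: (a) C^i_{jk} = C^i_{kj} for all i, j, k; (b) Σ_{m=1}^{4} C^i_{jm}·y_m = 0 for all i, j; and (c) Σ_{m=1}^{4} C^m_{jm} = 0 for all j (sum over m with m appearing as both the upper index and one lower index). -/
/-!
The weight `y_i / (y_j y_k)` is symmetric in `j, k` and cancels against `y_m` in (b) and against
itself in (c), so all three properties reduce to properties of the constant tensor `A`: its
symmetry in the lower indices, and the vanishing of `∑ₘ A^i_{jm}` and `∑ₘ A^m_{jm}`. The latter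
hold because in dimension 4 the four copies of the constant `-1/8` cancel the Kronecker terms.
-/

open Finset

section DTensor

variable {ι : Type*} (A : ι → ι → ι → ℝ) (y : ι → ℝ)

noncomputable def dTensor (i j k : ι) : ℝ := A i j k * y i / (y j * y k)

variable {A y}

theorem dTensor_comm {i : ι} (hA : ∀ j k, A i j k = A i k j) (j k : ι) :
    dTensor A y i j k = dTensor A y i k j := by
  rw [dTensor, dTensor, hA, mul_comm (y j)]

theorem sum_dTensor_mul [Fintype ι] (hy : ∀ m, y m ≠ 0) (i j : ι) :
    ∑ m, dTensor A y i j m * y m = y i / y j * ∑ m, A i j m := by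
  rw [mul_sum]
  refine sum_congr rfl fun m _ => ?_
  rw [dTensor]
  field_simp [hy m]

theorem sum_dTensor_diag [Fintype ι] (hy : ∀ m, y m ≠ 0) (j : ι) :
    ∑ m, dTensor A y m j m = (∑ m, A m j m) / y j := by
  rw [sum_div]
  refine sum_congr rfl fun m _ => ?_
  rw [dTensor]
  field_simp [hy m]

end DTensor


noncomputable def berwaldMoorA (i j k : Fin 4) : ℝ :=
  (2 * (if i = j then (1 : ℝ) else 0) + 2 * (if i = k then (1 : ℝ) else 0)
    + 2 * (if j = k then (1 : ℝ) else 0)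
    - 8 * (if i = j then (1 : ℝ) else 0) * (if j = k then (1 : ℝ) else 0)
    - 1) / 8

theorem berwaldMoorA_comm (i j k : Fin 4) : berwaldMoorA i j k = berwaldMoorA i k j := by
  have hδ : (if i = j then (1 : ℝ) else 0) * (if j = k then 1 else 0)
      = (if i = k then 1 else 0) * (if k = j then 1 else 0) := by
    split_ifs <;> grind
  have hjk : (if j = k then (1 : ℝ) else 0) = if k = j then 1 else 0 := by
    simp only [eq_comm]
  unfold berwaldMoorA
  rw [mul_assoc, mul_assoc, hδ, hjk]
  ring

theorem sum_berwaldMoorA (i j : Fin 4) : ∑ m, berwaldMoorA i j m = 0 := by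
  simp only [berwaldMoorA, ← sum_div, sum_sub_distrib, sum_add_distrib, ← mul_sum, sum_ite_eq,
    mem_univ, if_true, sum_const, card_univ, Fintype.card_fin]
  split_ifs <;> norm_num

theorem sum_berwaldMoorA_diag (j : Fin 4) : ∑ m, berwaldMoorA m j m = 0 := by
  simp only [berwaldMoorA, ← sum_div, sum_sub_distrib, sum_add_distrib, ← mul_sum, sum_ite_eq',
    mem_univ, if_true, sum_const, card_univ, Fintype.card_fin, eq_comm (a := j)]
  norm_num

/-- The d-tensor `C^i_{jk} = A^i_{jk}·y_i/(y_j y_k)` satisfies: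
(a) `C^i_{jk} = C^i_{kj}`; (b) `Σ_m C^i_{jm}·y_m = 0`; (c) `Σ_m C^m_{jm} = 0`. -/
theorem berwald_moor_C_properties
    (y : Fin 4 → ℝ) (hy : ∀ i, 0 < y i)
    (A : Fin 4 → Fin 4 → Fin 4 → ℝ)
    (hA : ∀ i j k, A i j k =
      (2 * (if i = j then (1 : ℝ) else 0) + 2 * (if i = k then (1 : ℝ) else 0)
        + 2 * (if j = k then (1 : ℝ) else 0)
        - 8 * (if i = j then (1 : ℝ) else 0) * (if j = k then (1 : ℝ) else 0)
        - 1) / 8)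
    (C : Fin 4 → Fin 4 → Fin 4 → ℝ)
    (hC : ∀ i j k, C i j k = A i j k * y i / (y j * y k)) :
    (∀ i j k, C i j k = C i k j) ∧
    (∀ i j, ∑ m, C i j m * y m = 0) ∧
    (∀ j, ∑ m, C m j m = 0) := by
  obtain rfl : C = dTensor A y := funext fun i => funext fun j => funext (hC i j)
  obtain rfl : A = berwaldMoorA := funext fun i => funext fun j => funext (hA i j)
  have hy₀ : ∀ m, y m ≠ 0 := fun m => (hy m).ne'
  refine ⟨fun i => dTensor_comm (berwaldMoorA_comm i), fun i j => ?_, fun j => ?_⟩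
  · rw [sum_dTensor_mul hy₀, sum_berwaldMoorA, mul_zero]
  · rw [sum_dTensor_diag hy₀, sum_berwaldMoorA_diag, zero_div]
end

section
/- Define, on ℝ × {y ∈ ℝ⁴ : all y_i > 0}, the components M^k(t,y) := −κ(t)·y_k, N^k_j(t) := −(κ(t)/3)·δ^k_j, and L^i_{jk}(t,y) := (κ(t)/3)·C^i_{jk}(y). Then the torsion components of the Cartan canonical connection are: (a) P^k_{i,j} := ∂N^k_i/∂y_j − L^k_{ji} = −(κ(t)/3)·C^k_{ij}(y); (b) R^k_j := [∂M^k/∂x_j + (κ(t)/3)·∂M^k/∂y_j] − [∂N^k_j/∂t + κ(t)·Σ_{p=1}^{4} y_p·∂N^k_j/∂y_p] = (1/3)·(κ'(t) − κ(t)²)·δ^k_j, for all j, k ∈ {1,2,3,4} (here M^k does not depend on the x-variables, so ∂M^k/∂x_j = 0). -/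
/-- Partial derivative of a function of `y : Fin 4 → ℝ` with respect to the
`k`-th component, evaluated at `y`. -/
noncomputable def pd (f : (Fin 4 → ℝ) → ℝ) (k : Fin 4) (y : Fin 4 → ℝ) : ℝ :=
  deriv (fun s => f (Function.update y k s)) (y k)

lemma pd_const (c : ℝ) (k : Fin 4) (y : Fin 4 → ℝ) : pd (fun _ => c) k y = 0 := by
  simp [pd]

/-- With `M^k(t,y) = −κ(t)·y_k`, `N^k_j(t) = −(κ(t)/3)·δ^k_j` and
`L^i_{jk}(t,y) = (κ(t)/3)·C^i_{jk}(y)`, the torsion components of the Cartan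
canonical connection are:
(a) `P^k_{i,j} = ∂N^k_i/∂y_j − L^k_{ji} = −(κ(t)/3)·C^k_{ij}(y)`;
(b) `R^k_j = [∂M^k/∂x_j + (κ(t)/3)·∂M^k/∂y_j]
       − [∂N^k_j/∂t + κ(t)·Σ_p y_p·∂N^k_j/∂y_p]
     = (1/3)·(κ'(t) − κ(t)²)·δ^k_j` (with `∂M^k/∂x_j = 0`). -/
theorem berwald_moor_torsions
    (h : ℝ → ℝ) (hsm : ContDiff ℝ (⊤ : ℕ∞) h) (hpos : ∀ t, 0 < h t)
    (κ : ℝ → ℝ) (hκ : ∀ t, κ t = deriv h t / (2 * h t))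
    (t : ℝ) (y : Fin 4 → ℝ) (hy : ∀ i, 0 < y i)
    (A : Fin 4 → Fin 4 → Fin 4 → ℝ)
    (hA : ∀ i j k, A i j k =
      (2 * (if i = j then (1 : ℝ) else 0) + 2 * (if i = k then (1 : ℝ) else 0)
        + 2 * (if j = k then (1 : ℝ) else 0)
        - 8 * (if i = j then (1 : ℝ) else 0) * (if j = k then (1 : ℝ) else 0)
        - 1) / 8)
    (C : Fin 4 → Fin 4 → Fin 4 → (Fin 4 → ℝ) → ℝ)
    (hC : ∀ i j k z, C i j k z = A i j k * z i / (z j * z k))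
    (M : Fin 4 → ℝ → (Fin 4 → ℝ) → ℝ)
    (hM : ∀ k s z, M k s z = -(κ s) * z k)
    (N : Fin 4 → Fin 4 → ℝ → ℝ)
    (hN : ∀ k j s, N k j s = -(κ s / 3) * (if k = j then (1 : ℝ) else 0))
    (L : Fin 4 → Fin 4 → Fin 4 → ℝ → (Fin 4 → ℝ) → ℝ)
    (hL : ∀ i j k s z, L i j k s z = (κ s / 3) * C i j k z) :
    (∀ i j k, pd (fun _ => N k i t) j y - L k j i t y
      = -(κ t / 3) * C k i j y) ∧
    (∀ j k, (0 + (κ t / 3) * pd (M k t) j y)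
        - (deriv (fun s => N k j s) t + κ t * ∑ p, y p * pd (fun _ => N k j t) p y)
      = (1 / 3) * (deriv κ t - (κ t) ^ 2) * (if k = j then (1 : ℝ) else 0)) := by
  -- κ is differentiable
  have hκfun : κ = fun s => deriv h s / (2 * h s) := funext hκ
  have hsm' := hsm.of_le (le_refl _)
  have hd : Differentiable ℝ (deriv h) :=
    ((contDiff_infty_iff_deriv.mp hsm').2).differentiable (by simp)
  have hdκ : DifferentiableAt ℝ κ t := by
    rw [hκfun]
    exact (hd t).div ((differentiableAt_const 2).mul (hsm'.differentiable (by simp) t))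
      (by have := hpos t; positivity)
  constructor
  · intro i j k
    have e : A k j i = A k i j := by
      fin_cases k <;> fin_cases j <;> fin_cases i <;> norm_num [hA, Fin.ext_iff]
    rw [pd_const, hL, hC, hC, e]
    ring
  · intro j k
    -- sum of pd of constants is 0
    have hsum : (∑ p, y p * pd (fun _ => N k j t) p y) = 0 := by
      apply Finset.sum_eq_zero
      intro p _
      rw [pd_const]; ring
    -- deriv of N k j
    have hderivN : deriv (fun s => N k j s) t
        = -(deriv κ t / 3) * (if k = j then (1:ℝ) else 0) := by
      have : (fun s => N k j s) = fun s => κ s * (-(if k = j then (1:ℝ) else 0) / 3) := by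
        funext s; rw [hN]; ring
      rw [this, deriv_mul_const hdκ]
      ring
    -- pd of M
    have hpdM : pd (M k t) j y = -(κ t) * (if k = j then (1:ℝ) else 0) := by
      unfold pd
      have : (fun s => M k t (Function.update y j s))
          = fun s => -(κ t) * (Function.update y j s k) := by
        funext s; rw [hM]
      rw [this]
      by_cases hkj : k = j
      · subst hkj
        simp only [Function.update_self, if_pos rfl, mul_one]
        simp only [neg_mul]
        simpa using ((hasDerivAt_id (y k)).const_mul (κ t)).deriv
      · simp [Function.update_of_ne hkj, hkj]
    rw [hsum, hderivN, hpdM]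
    ring
end

section
/- Define L^i_{jk}(t,y) := (κ(t)/3)·C^i_{jk}(y) and the curvature combinations: R^l_{ijk} := (κ(t)/3)·∂L^l_{ij}/∂y_k − (κ(t)/3)·∂L^l_{ik}/∂y_j + Σ_{m}(L^m_{ij}L^l_{mk} − L^m_{ik}L^l_{mj}), and P^l_{ijk} := ∂L^l_{ij}/∂y_k − C^l_{ik∥j} + Σ_m C^l_{im}·(−(κ(t)/3)C^m_{jk}), where C^l_{ik∥j} := (κ(t)/3)·∂C^l_{ik}/∂y_j + Σ_m (C^m_{ik}L^l_{mj} − C^l_{mk}L^m_{ij} − C^l_{im}L^m_{kj}). Then for all i, j, k, l ∈ {1,2,3,4}: R^l_{ijk} = (κ(t)²/9)·S^l_{ijk}(y) and P^l_{ijk} = (κ(t)/3)·S^l_{ijk}(y). -/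
/-- With `L^i_{jk}(t,y) = (κ(t)/3)·C^i_{jk}(y)`, the curvature
combinations `R^l_{ijk}` and `P^l_{ijk}` of the Cartan canonical connection
satisfy `R^l_{ijk} = (κ(t)²/9)·S^l_{ijk}(y)` and
`P^l_{ijk} = (κ(t)/3)·S^l_{ijk}(y)`. -/
theorem berwald_moor_curvatures
    (h : ℝ → ℝ) (hsm : ContDiff ℝ (⊤ : ℕ∞) h) (hpos : ∀ t, 0 < h t)
    (κ : ℝ → ℝ) (hκ : ∀ t, κ t = deriv h t / (2 * h t))
    (t : ℝ) (y : Fin 4 → ℝ) (hy : ∀ i, 0 < y i)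
    (A : Fin 4 → Fin 4 → Fin 4 → ℝ)
    (hA : ∀ i j k, A i j k =
      (2 * (if i = j then (1 : ℝ) else 0) + 2 * (if i = k then (1 : ℝ) else 0)
        + 2 * (if j = k then (1 : ℝ) else 0)
        - 8 * (if i = j then (1 : ℝ) else 0) * (if j = k then (1 : ℝ) else 0)
        - 1) / 8)
    (C : Fin 4 → Fin 4 → Fin 4 → (Fin 4 → ℝ) → ℝ)
    (hC : ∀ i j k z, C i j k z = A i j k * z i / (z j * z k))
    (S : Fin 4 → Fin 4 → Fin 4 → Fin 4 → (Fin 4 → ℝ) → ℝ)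
    (hS : ∀ l i j k z, S l i j k z =
      pd (C l i j) k z - pd (C l i k) j z
        + ∑ m, (C m i j z * C l m k z - C m i k z * C l m j z))
    (L : Fin 4 → Fin 4 → Fin 4 → ℝ → (Fin 4 → ℝ) → ℝ)
    (hL : ∀ i j k s z, L i j k s z = (κ s / 3) * C i j k z)
    (R P Cbar : Fin 4 → Fin 4 → Fin 4 → Fin 4 → ℝ)
    (hR : ∀ l i j k, R l i j k =
      (κ t / 3) * pd (L l i j t) k y - (κ t / 3) * pd (L l i k t) j y
        + ∑ m, (L m i j t y * L l m k t y - L m i k t y * L l m j t y))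
    (hCbar : ∀ l i k j, Cbar l i k j =
      (κ t / 3) * pd (C l i k) j y
        + ∑ m, (C m i k y * L l m j t y - C l m k y * L m i j t y
            - C l i m y * L m k j t y))
    (hP : ∀ l i j k, P l i j k =
      pd (L l i j t) k y - Cbar l i k j
        + ∑ m, C l i m y * (-(κ t / 3) * C m j k y)) :
    (∀ l i j k, R l i j k = ((κ t) ^ 2 / 9) * S l i j k y) ∧
    (∀ l i j k, P l i j k = (κ t / 3) * S l i j k y) := by
  have hpd : ∀ l i j k : Fin 4, pd (L l i j t) k y = (κ t / 3) * pd (C l i j) k y := by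
    intro l i j k
    unfold pd
    have : (fun s => L l i j t (Function.update y k s))
        = fun s => (κ t / 3) * C l i j (Function.update y k s) := by
      funext s; rw [hL]
    rw [this, deriv_const_mul_field]
  have hCsymm : ∀ m a b : Fin 4, C m a b y = C m b a y := by
    intro m a b
    rw [hC, hC, hA, hA]
    by_cases h1 : a = b
    · subst h1; ring
    · rw [if_neg h1, if_neg (fun e : b = a => h1 e.symm)]; ring
  constructor
  · intro l i j k
    have hsum : ∑ m, (L m i j t y * L l m k t y - L m i k t y * L l m j t y)
        = ((κ t) ^ 2 / 9) * ∑ m, (C m i j y * C l m k y - C m i k y * C l m j y) := by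
      rw [Finset.mul_sum]
      refine Finset.sum_congr rfl fun m _ => ?_
      simp only [hL]; ring
    rw [hR, hpd, hpd, hS]
    linear_combination hsum
  · intro l i j k
    have hsum : (-∑ m, (C m i k y * L l m j t y - C l m k y * L m i j t y
            - C l i m y * L m k j t y))
        + ∑ m, C l i m y * (-(κ t / 3) * C m j k y)
        = (κ t / 3) * ∑ m, (C m i j y * C l m k y - C m i k y * C l m j y) := by
      rw [Finset.mul_sum, ← Finset.sum_neg_distrib, ← Finset.sum_add_distrib]
      refine Finset.sum_congr rfl fun m _ => ?_
      simp only [hL]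
      rw [hCsymm m k j]
      ring
    rw [hP, hCbar, hpd, hS]
    linear_combination hsum
end

section
/- The raised Ricci-type d-tensor Sup^m_i := ((5 − 14δ^m_i)/4)·(1/√G)·(y_m/y_i) satisfies the two identities: (a) Σ_{m=1}^{4} Σ_{r=1}^{4} Sup^m_r·C^r_{im} = 0 for every i ∈ {1,2,3,4}; and (b) Σ_{m=1}^{4} ∂Sup^m_i/∂y_m = 3/(√G·y_i) for every i ∈ {1,2,3,4}. -/
noncomputable def cartanCoeff (i j k : Fin 4) : ℝ :=
  (2 * (if i = j then (1 : ℝ) else 0) + 2 * (if i = k then (1 : ℝ) else 0)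
    + 2 * (if j = k then (1 : ℝ) else 0)
    - 8 * (if i = j then (1 : ℝ) else 0) * (if j = k then (1 : ℝ) else 0) - 1) / 8

noncomputable def supCoeff (m i : Fin 4) : ℝ :=
  (5 - 14 * (if m = i then (1 : ℝ) else 0)) / 4

theorem sum_sum_supCoeff_mul_cartanCoeff (i : Fin 4) :
    ∑ m, ∑ r, supCoeff m r * cartanCoeff r i m = 0 := by
  fin_cases i <;> simp [Fin.sum_univ_four, supCoeff, cartanCoeff] <;> norm_num

theorem sum_supCoeff_mul_half_sub_kronecker (i : Fin 4) :
    ∑ m, supCoeff m i * (1 / 2 - if m = i then (1 : ℝ) else 0) = 3 := by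
  fin_cases i <;> simp [Fin.sum_univ_four, supCoeff] <;> norm_num

theorem hasDerivAt_one_div_sqrt_mul_const {K x : ℝ} (hK : 0 < K) (hx : 0 < x) :
    HasDerivAt (fun s => 1 / √(s * K)) (-(1 / √(x * K)) / (2 * x)) x := by
  have hxK : 0 < x * K := mul_pos hx hK
  have hsqrt : HasDerivAt (fun s => √(s * K)) (1 / (2 * √(x * K)) * K) x :=
    (Real.hasDerivAt_sqrt hxK.ne').comp x (hasDerivAt_mul_const K)
  refine ((hasDerivAt_const x (1 : ℝ)).div hsqrt (Real.sqrt_pos.mpr hxK).ne').congr_deriv ?_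
  rw [Real.sq_sqrt hxK.le]
  field_simp
  ring

theorem pd_mul_one_div_sqrt_prod_mul_div (c : ℝ) (m i : Fin 4) {y : Fin 4 → ℝ}
    (hy : ∀ p, 0 < y p) :
    pd (fun z => c * (1 / √(∏ p, z p)) * (z m / z i)) m y
      = c * (1 / 2 - if m = i then (1 : ℝ) else 0) / (√(∏ p, y p) * y i) := by
  set K := ∏ p ∈ Finset.univ.erase m, y p
  have hK : 0 < K := Finset.prod_pos fun p _ => hy p
  have hG : ∏ p, y p = y m * K := (Finset.mul_prod_erase _ y (Finset.mem_univ m)).symm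
  have hprod : ∀ s, ∏ p, Function.update y m s p = s * K := fun s => by
    rw [Finset.prod_update_of_mem (Finset.mem_univ m), Finset.sdiff_singleton_eq_erase]
  have hym := hy m
  have hinv := hasDerivAt_one_div_sqrt_mul_const hK hym
  unfold pd
  by_cases hmi : m = i
  · subst hmi
    simp only [hprod, Function.update_self, hG, if_true]
    have hderiv : HasDerivAt (fun s => c * (1 / √(s * K)) * (s / s))
        (c * (-(1 / √(y m * K)) / (2 * y m)) * (y m / y m)
          + c * (1 / √(y m * K)) * ((1 * y m - y m * 1) / y m ^ 2)) (y m) :=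
      (hinv.const_mul c).mul ((hasDerivAt_id' (y m)).div (hasDerivAt_id' (y m)) hym.ne')
    rw [hderiv.deriv]
    field_simp
    ring
  · have hyi := hy i
    simp only [hprod, Function.update_self, Function.update_of_ne (Ne.symm hmi), hG, if_neg hmi]
    have hderiv : HasDerivAt (fun s => c * (1 / √(s * K)) * (s / y i))
        (c * (-(1 / √(y m * K)) / (2 * y m)) * (y m / y i)
          + c * (1 / √(y m * K)) * (1 / y i)) (y m) :=
      (hinv.const_mul c).mul ((hasDerivAt_id' (y m)).div_const (y i))
    rw [hderiv.deriv]
    field_simp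
    ring

/-- The raised Ricci-type d-tensor
`Sup^m_i = ((5 − 14δ^m_i)/4)·(1/√G)·(y_m/y_i)` satisfies:
(a) `Σ_{m,r} Sup^m_r·C^r_{im} = 0`; (b) `Σ_m ∂Sup^m_i/∂y_m = 3/(√G·y_i)`. -/
theorem berwald_moor_Sup_identities
    (y : Fin 4 → ℝ) (hy : ∀ i, 0 < y i)
    (A : Fin 4 → Fin 4 → Fin 4 → ℝ)
    (hA : ∀ i j k, A i j k =
      (2 * (if i = j then (1 : ℝ) else 0) + 2 * (if i = k then (1 : ℝ) else 0)
        + 2 * (if j = k then (1 : ℝ) else 0)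
        - 8 * (if i = j then (1 : ℝ) else 0) * (if j = k then (1 : ℝ) else 0)
        - 1) / 8)
    (C : Fin 4 → Fin 4 → Fin 4 → (Fin 4 → ℝ) → ℝ)
    (hC : ∀ i j k z, C i j k z = A i j k * z i / (z j * z k))
    (Sup : Fin 4 → Fin 4 → (Fin 4 → ℝ) → ℝ)
    (hSup : ∀ m i z, Sup m i z =
      ((5 - 14 * (if m = i then (1 : ℝ) else 0)) / 4)
        * (1 / Real.sqrt (∏ p, z p)) * (z m / z i)) :
    (∀ i, ∑ m, ∑ r, Sup m r y * C r i m y = 0) ∧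
    (∀ i, ∑ m, pd (Sup m i) m y = 3 / (Real.sqrt (∏ p, y p) * y i)) := by
  obtain rfl : A = cartanCoeff := funext fun i => funext fun j => funext fun k => hA i j k
  obtain rfl : Sup = fun m i z => supCoeff m i * (1 / √(∏ p, z p)) * (z m / z i) :=
    funext fun m => funext fun i => funext fun z => hSup m i z
  refine ⟨fun i => ?_, fun i => ?_⟩
  · have hterm : ∀ m r, supCoeff m r * (1 / √(∏ p, y p)) * (y m / y r) * C r i m y
        = supCoeff m r * cartanCoeff r i m / (√(∏ p, y p) * y i) := fun m r => by
      have := hy m; have := hy r; have := hy i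
      rw [hC]
      field_simp
    simp only [hterm, ← Finset.sum_div, sum_sum_supCoeff_mul_cartanCoeff, zero_div]
  · simp only [pd_mul_one_div_sqrt_prod_mul_div _ _ _ hy, ← Finset.sum_div,
      sum_supCoeff_mul_half_sub_kronecker]
end

section
/- One has Σ_{p,q=1}^{4} ginv^{pq}·S_{pq} = −9/√G; consequently, for any smooth h : ℝ → ℝ with h(t) > 0 and κ(t) := h'(t)/(2h(t)), the scalar curvature of the Cartan canonical connection, Sc := Σ_{p,q} ginv^{pq}·R_{pq} + h(t)·Σ_{p,q} ginv^{pq}·S_{pq} with R_{pq} := (κ(t)²/9)·S_{pq}, equals −(9·h(t) + κ(t)²)/√G. -/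
/-- `Σ_{p,q} ginv^{pq}·S_{pq} = −9/√G`; consequently, for smooth
`h > 0` with `κ(t) = h'(t)/(2h(t))`, the scalar curvature
`Sc = Σ_{p,q} ginv^{pq}·R_{pq} + h(t)·Σ_{p,q} ginv^{pq}·S_{pq}` with
`R_{pq} = (κ(t)²/9)·S_{pq}` equals `−(9·h(t) + κ(t)²)/√G`. -/
theorem berwald_moor_scalar_curvature
    (y : Fin 4 → ℝ) (hy : ∀ i, 0 < y i)
    (G : ℝ) (hG : G = ∏ i, y i)
    (ginv : Fin 4 → Fin 4 → ℝ)
    (hginv : ∀ j k, ginv j k =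
      2 * (1 - 2 * (if j = k then (1 : ℝ) else 0)) * y j * y k / Real.sqrt G)
    (S : Fin 4 → Fin 4 → ℝ)
    (hS : ∀ p q, S p q =
      (7 * (if p = q then (1 : ℝ) else 0) - 1) / (8 * y p * y q)) :
    (∑ p, ∑ q, ginv p q * S p q = -9 / Real.sqrt G) ∧
    (∀ (h : ℝ → ℝ), ContDiff ℝ (⊤ : ℕ∞) h → (∀ t, 0 < h t) →
      ∀ (κ : ℝ → ℝ), (∀ t, κ t = deriv h t / (2 * h t)) →
      ∀ (t : ℝ) (R : Fin 4 → Fin 4 → ℝ),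
        (∀ p q, R p q = ((κ t) ^ 2 / 9) * S p q) →
        (∑ p, ∑ q, ginv p q * R p q) + h t * ∑ p, ∑ q, ginv p q * S p q
          = -(9 * h t + (κ t) ^ 2) / Real.sqrt G) := by
  have hy0 : ∀ i, y i ≠ 0 := fun i => (hy i).ne'
  have hGpos : 0 < G := hG ▸ Finset.prod_pos fun i _ => hy i
  have hsq : Real.sqrt G ≠ 0 := (Real.sqrt_pos.mpr hGpos).ne'
  have key : ∀ p q, ginv p q * S p q =
      (1 - 2 * (if p = q then (1 : ℝ) else 0)) *
        (7 * (if p = q then (1 : ℝ) else 0) - 1) / (4 * Real.sqrt G) := by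
    intro p q
    rw [hginv, hS]
    by_cases hpq : p = q <;> simp only [hpq, if_true, if_false, eq_self_iff_true] <;>
      field_simp [hy0 p, hy0 q, hsq] <;> ring
  have hsum : ∑ p, ∑ q, ginv p q * S p q = -9 / Real.sqrt G := by
    simp only [key, Fin.sum_univ_four]
    simp (config := { decide := true }) only [Fin.ext_iff]
    norm_num
    ring
  refine ⟨hsum, ?_⟩
  intro h _ _ κ _ t R hR
  have : ∑ p, ∑ q, ginv p q * R p q =
      ((κ t) ^ 2 / 9) * ∑ p, ∑ q, ginv p q * S p q := by
    rw [Finset.mul_sum]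
    refine Finset.sum_congr rfl fun p _ => ?_
    rw [Finset.mul_sum]
    exact Finset.sum_congr rfl fun q _ => by rw [hR]; ring
  rw [this, hsum]
  ring
end

section
/- The electromagnetic distinguished 2-form of the rheonomic Berwald–Moór metric vanishes identically: for all i, j ∈ {1,2,3,4}, (1/(2h(t)))·[ Σ_{m=1}^{4} g_{jm}·N^m_i − Σ_{m=1}^{4} g_{im}·N^m_j + Σ_{m,r=1}^{4} (g_{ir}·L^r_{jm} − g_{jr}·L^r_{im})·y_m ] = 0, where N^m_i := −(κ(t)/3)·δ^m_i and L^r_{jm} := (κ(t)/3)·C^r_{jm}(y). -/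
/-- The electromagnetic 2-form of the rheonomic Berwald–Moór
metric vanishes identically: for all `i, j`,
`(1/(2h(t)))·[Σ_m g_{jm}·N^m_i − Σ_m g_{im}·N^m_j
   + Σ_{m,r} (g_{ir}·L^r_{jm} − g_{jr}·L^r_{im})·y_m] = 0`,
where `N^m_i = −(κ(t)/3)·δ^m_i` and `L^r_{jm} = (κ(t)/3)·C^r_{jm}(y)`. -/
theorem berwald_moor_electromagnetic_trivial
    (h : ℝ → ℝ) (hsm : ContDiff ℝ (⊤ : ℕ∞) h) (hpos : ∀ t, 0 < h t)
    (κ : ℝ → ℝ) (hκ : ∀ t, κ t = deriv h t / (2 * h t))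
    (t : ℝ) (y : Fin 4 → ℝ) (hy : ∀ i, 0 < y i)
    (G : ℝ) (hG : G = ∏ i, y i)
    (g : Fin 4 → Fin 4 → ℝ)
    (hg : ∀ i j, g i j =
      (1 - 2 * (if i = j then (1 : ℝ) else 0)) * Real.sqrt G / (8 * y i * y j))
    (A : Fin 4 → Fin 4 → Fin 4 → ℝ)
    (hA : ∀ i j k, A i j k =
      (2 * (if i = j then (1 : ℝ) else 0) + 2 * (if i = k then (1 : ℝ) else 0)
        + 2 * (if j = k then (1 : ℝ) else 0)
        - 8 * (if i = j then (1 : ℝ) else 0) * (if j = k then (1 : ℝ) else 0)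
        - 1) / 8)
    (C : Fin 4 → Fin 4 → Fin 4 → ℝ)
    (hC : ∀ i j k, C i j k = A i j k * y i / (y j * y k))
    (N : Fin 4 → Fin 4 → ℝ)
    (hN : ∀ m i, N m i = -(κ t / 3) * (if m = i then (1 : ℝ) else 0))
    (L : Fin 4 → Fin 4 → Fin 4 → ℝ)
    (hL : ∀ r j m, L r j m = (κ t / 3) * C r j m) :
    ∀ i j, (1 / (2 * h t)) *
      ((∑ m, g j m * N m i) - (∑ m, g i m * N m j)
        + ∑ m, ∑ r, (g i r * L r j m - g j r * L r i m) * y m) = 0 := by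
  intro i j
  have hy0 : ∀ k, y k ≠ 0 := fun k => (hy k).ne'
  -- first two sums collapse and cancel
  have h1 : ∀ a b : Fin 4, (∑ m, g a m * N m b) = -(κ t / 3) * g a b := by
    intro a b
    rw [Finset.sum_eq_single b]
    · rw [hN]; simp; ring
    · intro m _ hm
      rw [hN]; simp [hm]
    · simp
  have gsym : g j i = g i j := by
    rw [hg, hg]
    rcases eq_or_ne i j with hij | hij
    · subst hij; ring
    · rw [if_neg hij, if_neg (Ne.symm hij)]; ring
  -- the column sums of A vanish
  have sumA : ∀ r a : Fin 4, (∑ m, A r a m) = 0 := by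
    intro r a
    have s1 : (∑ m : Fin 4, (if r = m then (1:ℝ) else 0)) = 1 := by simp
    have s2 : (∑ m : Fin 4, (if a = m then (1:ℝ) else 0)) = 1 := by simp
    calc (∑ m, A r a m)
        = ∑ m : Fin 4, ((if r = a then (1:ℝ) else 0) * (2/8)
            + (if r = m then (1:ℝ) else 0) * (2/8)
            + (if a = m then (1:ℝ) else 0) * (2/8)
            - (if r = a then (1:ℝ) else 0) * ((if a = m then (1:ℝ) else 0) * (8/8))
            - 1/8) := Finset.sum_congr rfl (fun m _ => by rw [hA]; ring)
      _ = 0 := by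
          simp only [Finset.sum_sub_distrib, Finset.sum_add_distrib, ← Finset.sum_mul,
            ← Finset.mul_sum, s1, s2, Finset.sum_const, Finset.card_univ, Fintype.card_fin,
            nsmul_eq_mul, Nat.cast_ofNat, mul_one]
          ring
  set c : ℝ := (κ t / 3) * Real.sqrt G / (8 * y i * y j) with hc
  have key : ∀ a b : Fin 4, ∀ r m : Fin 4,
      g a r * L r b m * y m =
      ((κ t / 3) * Real.sqrt G / (8 * y a * y b)) *
        ((1 - 2 * (if a = r then (1:ℝ) else 0)) * A r b m) := by
    intro a b r m
    rw [hg, hL, hC]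
    field_simp [hy0]
  have hdouble : (∑ m, ∑ r, (g i r * L r j m - g j r * L r i m) * y m) = 0 := by
    rw [Finset.sum_comm]
    have : ∀ r : Fin 4, (∑ m, (g i r * L r j m - g j r * L r i m) * y m) = 0 := by
      intro r
      have : ∀ m : Fin 4, (g i r * L r j m - g j r * L r i m) * y m =
          ((κ t / 3) * Real.sqrt G / (8 * y i * y j)) *
            ((1 - 2 * (if i = r then (1:ℝ) else 0)) * A r j m) -
          ((κ t / 3) * Real.sqrt G / (8 * y j * y i)) *
            ((1 - 2 * (if j = r then (1:ℝ) else 0)) * A r i m) := by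
        intro m
        rw [sub_mul, key i j r m, key j i r m]
      simp only [this]
      rw [Finset.sum_sub_distrib, ← Finset.mul_sum, ← Finset.mul_sum,
        ← Finset.mul_sum, ← Finset.mul_sum, sumA, sumA]
      ring
    simp [this]
  rw [h1, h1, gsym, hdouble]
  ring
end

section
/- Define the stress-energy components T¹₁(t,y) := ξ(t)/√G, Tᵐᵢ(t,y) := (κ(t)²/(9𝒦))·Sup^m_i + (ξ(t)/√G)·δ^m_i, U^m_i(t,y) := (h(t)·κ(t)/(3𝒦))·Sup^m_i, V^m_i(t,y) := (κ(t)/(3𝒦))·Sup^m_i, and W^m_i(t,y) := (h(t)/𝒦)·Sup^m_i + (ξ(t)/√G)·δ^m_i. Then the following three conservation-law identities hold for every i ∈ {1,2,3,4}: (a) ∂T¹₁/∂t + κ(t)·Σ_{p=1}^{4} y_p·∂T¹₁/∂y_p = (1/(8𝒦·h(t)²))·h'(t)·[2h''(t) − 3h'(t)²/h(t)]·(1/√G); (b) (κ(t)/3)·Σ_{m=1}^{4} ∂Tᵐᵢ/∂y_m + Σ_{m=1}^{4} ∂U^m_i/∂y_m = (κ(t)·ξ(t)/18)·(1/(√G·y_i));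 (c) (κ(t)/3)·Σ_{m=1}^{4} ∂V^m_i/∂y_m + Σ_{m=1}^{4} ∂W^m_i/∂y_m = (ξ(t)/6)·(1/(√G·y_i)). -/
lemma deriv_aux (a b C x : ℝ) (hC : 0 < C) (hx : 0 < x) :
    deriv (fun s : ℝ => a * (Real.sqrt (s * C))⁻¹ * s + b * (Real.sqrt (s * C))⁻¹) x
      = a / (2 * Real.sqrt (x * C)) - b / (2 * x * Real.sqrt (x * C)) := by
  have hxC : 0 < x * C := mul_pos hx hC
  have hS : 0 < Real.sqrt (x * C) := Real.sqrt_pos.mpr hxC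
  have h1 : HasDerivAt (fun s : ℝ => s * C) ((1:ℝ) * C) x := (hasDerivAt_id x).mul_const C
  have h2 : HasDerivAt (fun s : ℝ => Real.sqrt (s * C))
      (1 / (2 * Real.sqrt (x * C)) * ((1:ℝ) * C)) x :=
    (Real.hasDerivAt_sqrt hxC.ne').comp x h1
  have h3 : HasDerivAt (fun s : ℝ => (Real.sqrt (s * C))⁻¹)
      (-(1 / (2 * Real.sqrt (x * C)) * ((1:ℝ) * C)) / Real.sqrt (x * C) ^ 2) x :=
    h2.inv hS.ne'
  have h4 : HasDerivAt
      (fun s : ℝ => a * (Real.sqrt (s * C))⁻¹ * s + b * (Real.sqrt (s * C))⁻¹)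
      ((a * (-(1 / (2 * Real.sqrt (x * C)) * ((1:ℝ) * C)) / Real.sqrt (x * C) ^ 2)) * x
        + (a * (Real.sqrt (x * C))⁻¹) * 1
        + b * (-(1 / (2 * Real.sqrt (x * C)) * ((1:ℝ) * C)) / Real.sqrt (x * C) ^ 2)) x :=
    ((h3.const_mul a).mul (hasDerivAt_id x)).add (h3.const_mul b)
  rw [h4.deriv, Real.sq_sqrt hxC.le]
  field_simp
  ring

lemma pd_master (y : Fin 4 → ℝ) (hy : ∀ i, 0 < y i) (k : Fin 4)
    (f : (Fin 4 → ℝ) → ℝ) (a b : ℝ)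
    (hf : ∀ s : ℝ, 0 < s → f (Function.update y k s)
        = a * (Real.sqrt (∏ p, Function.update y k s p))⁻¹ * s
          + b * (Real.sqrt (∏ p, Function.update y k s p))⁻¹) :
    pd f k y = a / (2 * Real.sqrt (∏ p, y p))
        - b / (2 * y k * Real.sqrt (∏ p, y p)) := by
  classical
  set C := ∏ p ∈ Finset.univ.erase k, y p with hCdef
  have hC : 0 < C := Finset.prod_pos fun p _ => hy p
  have hprod : ∀ s : ℝ, (∏ p, Function.update y k s p) = s * C := by
    intro s
    rw [Finset.prod_update_of_mem (Finset.mem_univ k), Finset.sdiff_singleton_eq_erase]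
  have hyk : (∏ p, y p) = y k * C :=
    (Finset.mul_prod_erase Finset.univ y (Finset.mem_univ k)).symm
  have hev : (fun s => f (Function.update y k s)) =ᶠ[nhds (y k)]
      fun s => a * (Real.sqrt (s * C))⁻¹ * s + b * (Real.sqrt (s * C))⁻¹ := by
    filter_upwards [Ioi_mem_nhds (hy k)] with s hs
    rw [hf s hs, hprod s]
  unfold pd
  rw [hev.deriv_eq, deriv_aux a b C (y k) hC (hy k), hyk]

lemma sum_if_fin4 (i : Fin 4) (A B : ℝ) :
    (∑ m : Fin 4, if m = i then A else B) = A + 3 * B := by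
  fin_cases i <;> simp [Fin.sum_univ_four] <;> ring

set_option maxHeartbeats 2000000 in
/-- The three geometrical conservation-law identities of the
stress-energy components of the rheonomic Berwald–Moór gravitational theory:
(a) `∂T¹₁/∂t + κ·Σ_p y_p·∂T¹₁/∂y_p
      = (1/(8𝒦h²))·h'·[2h'' − 3(h')²/h]·(1/√G)`;
(b) `(κ/3)·Σ_m ∂Tᵐᵢ/∂y_m + Σ_m ∂U^m_i/∂y_m = (κ·ξ/18)·(1/(√G·y_i))`;
(c) `(κ/3)·Σ_m ∂V^m_i/∂y_m + Σ_m ∂W^m_i/∂y_m = (ξ/6)·(1/(√G·y_i))`. -/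
theorem berwald_moor_conservation_laws
    (h : ℝ → ℝ) (hsm : ContDiff ℝ (⊤ : ℕ∞) h) (hpos : ∀ t, 0 < h t)
    (κ : ℝ → ℝ) (hκ : ∀ t, κ t = deriv h t / (2 * h t))
    (𝒦 : ℝ) (h𝒦 : 𝒦 ≠ 0)
    (ξ : ℝ → ℝ) (hξ : ∀ t, ξ t = (9 * h t + (κ t) ^ 2) / (2 * 𝒦))
    (t : ℝ) (y : Fin 4 → ℝ) (hy : ∀ i, 0 < y i)
    (G : ℝ) (hG : G = ∏ i, y i)
    (Sup : Fin 4 → Fin 4 → (Fin 4 → ℝ) → ℝ)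
    (hSup : ∀ m i z, Sup m i z =
      ((5 - 14 * (if m = i then (1 : ℝ) else 0)) / 4)
        * (1 / Real.sqrt (∏ p, z p)) * (z m / z i))
    (T1 : ℝ → (Fin 4 → ℝ) → ℝ)
    (hT1 : ∀ s z, T1 s z = ξ s / Real.sqrt (∏ p, z p))
    (T : Fin 4 → Fin 4 → ℝ → (Fin 4 → ℝ) → ℝ)
    (hT : ∀ m i s z, T m i s z =
      ((κ s) ^ 2 / (9 * 𝒦)) * Sup m i z
        + (ξ s / Real.sqrt (∏ p, z p)) * (if m = i then (1 : ℝ) else 0))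
    (U : Fin 4 → Fin 4 → ℝ → (Fin 4 → ℝ) → ℝ)
    (hU : ∀ m i s z, U m i s z = (h s * κ s / (3 * 𝒦)) * Sup m i z)
    (V : Fin 4 → Fin 4 → ℝ → (Fin 4 → ℝ) → ℝ)
    (hV : ∀ m i s z, V m i s z = (κ s / (3 * 𝒦)) * Sup m i z)
    (W : Fin 4 → Fin 4 → ℝ → (Fin 4 → ℝ) → ℝ)
    (hW : ∀ m i s z, W m i s z =
      (h s / 𝒦) * Sup m i z
        + (ξ s / Real.sqrt (∏ p, z p)) * (if m = i then (1 : ℝ) else 0)) :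
    (deriv (fun s => T1 s y) t + κ t * ∑ p, y p * pd (T1 t) p y
      = (1 / (8 * 𝒦 * (h t) ^ 2)) * deriv h t
          * (2 * deriv (deriv h) t - 3 * (deriv h t) ^ 2 / h t)
          * (1 / Real.sqrt G)) ∧
    (∀ i, (κ t / 3) * (∑ m, pd (fun z => T m i t z) m y)
        + (∑ m, pd (fun z => U m i t z) m y)
      = (κ t * ξ t / 18) * (1 / (Real.sqrt G * y i))) ∧
    (∀ i, (κ t / 3) * (∑ m, pd (fun z => V m i t z) m y)
        + (∑ m, pd (fun z => W m i t z) m y)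
      = (ξ t / 6) * (1 / (Real.sqrt G * y i))) := by
  subst hG
  have hP : 0 < ∏ p, y p := Finset.prod_pos fun p _ => hy p
  set S := Real.sqrt (∏ p, y p) with hSdef
  have hS : 0 < S := Real.sqrt_pos.mpr hP
  clear_value S
  refine ⟨?_, ?_, ?_⟩
  · -- part (a)
    have hdh : HasDerivAt h (deriv h t) t :=
      ((hsm.differentiable (by simp)) t).hasDerivAt
    have hdh2 : HasDerivAt (deriv h) (deriv (deriv h) t) t :=
      ((((contDiff_infty_iff_deriv.mp (hsm.of_le (by simp))).2).differentiable
        (by simp)) t).hasDerivAt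
    have h2h : (2 : ℝ) * h t ≠ 0 := by
      have := hpos t; positivity
    have hκd : HasDerivAt (fun s => deriv h s / (2 * h s))
        ((deriv (deriv h) t * (2 * h t) - deriv h t * (2 * deriv h t)) / (2 * h t) ^ 2) t :=
      hdh2.div (hdh.const_mul 2) h2h
    have hfun : (fun s => T1 s y)
        = fun s => (9 * h s + (deriv h s / (2 * h s)) ^ 2) / (2 * 𝒦) * S⁻¹ := by
      funext s
      rw [hT1, hξ, hκ, ← hSdef, div_eq_mul_inv]
    have hd : HasDerivAt (fun s => (9 * h s + (deriv h s / (2 * h s)) ^ 2) / (2 * 𝒦) * S⁻¹) _ t :=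
      (((hdh.const_mul 9).add (hκd.pow 2)).div_const (2 * 𝒦)).mul_const S⁻¹
    have pdT1 : ∀ p : Fin 4, pd (T1 t) p y = 0 / (2 * S) - ξ t / (2 * y p * S) := by
      intro p
      rw [hSdef]
      exact pd_master y hy p (T1 t) 0 (ξ t) (fun s hs => by rw [hT1]; ring)
    have hterm : ∀ p : Fin 4, y p * pd (T1 t) p y = -(ξ t) / (2 * S) := by
      intro p
      rw [pdT1 p]
      have hp := (hy p).ne'
      field_simp
      ring
    have hsum : (∑ p, y p * pd (T1 t) p y) = -(2 * ξ t) / S := by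
      simp only [hterm, Fin.sum_univ_four]
      ring
    rw [hfun, hd.deriv, hsum, hκ t, hξ t, hκ t]
    have h0 := (hpos t).ne'
    push_cast
    obtain ⟨H2, hH2⟩ : ∃ x, x = deriv (deriv h) t := ⟨_, rfl⟩
    obtain ⟨H1, hH1⟩ : ∃ x, x = deriv h t := ⟨_, rfl⟩
    obtain ⟨H0, hH0⟩ : ∃ x, x = h t := ⟨_, rfl⟩
    rw [← hH2, ← hH1, ← hH0]
    rw [← hH0] at h0
    field_simp [h0, h𝒦, hS.ne']
    ring
  · -- part (b)
    intro i
    have pdT : ∀ m : Fin 4, pd (fun z => T m i t z) m y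
        = if m = i then (κ t ^ 2 / (4 * 𝒦) - ξ t) / (2 * y i * S)
          else κ t ^ 2 * 5 / (72 * 𝒦 * y i * S) := by
      intro m
      rw [hSdef]
      by_cases hmi : m = i
      · subst hmi
        rw [if_pos rfl,
          pd_master y hy m _ 0 (ξ t - κ t ^ 2 / (4 * 𝒦)) (fun s hs => by
            simp only [hT, hSup, Function.update_self, eq_self_iff_true, if_true]
            rw [div_self hs.ne']
            ring)]
        ring
      · have him : i ≠ m := fun hh => hmi hh.symm
        rw [if_neg hmi,
          pd_master y hy m _ (κ t ^ 2 * 5 / (36 * 𝒦 * y i)) 0 (fun s hs => by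
            simp only [hT, hSup, Function.update_self, Function.update_of_ne him,
              if_neg hmi]
            ring)]
        ring
    have pdU : ∀ m : Fin 4, pd (fun z => U m i t z) m y
        = if m = i then 3 * (h t * κ t) / (8 * 𝒦 * y i * S)
          else 5 * (h t * κ t) / (24 * 𝒦 * y i * S) := by
      intro m
      rw [hSdef]
      by_cases hmi : m = i
      · subst hmi
        rw [if_pos rfl,
          pd_master y hy m _ 0 (-(3 * (h t * κ t) / (4 * 𝒦))) (fun s hs => by
            simp only [hU, hSup, Function.update_self, eq_self_iff_true, if_true]
            rw [div_self hs.ne']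
            ring)]
        ring
      · have him : i ≠ m := fun hh => hmi hh.symm
        rw [if_neg hmi,
          pd_master y hy m _ (5 * (h t * κ t) / (12 * 𝒦 * y i)) 0 (fun s hs => by
            simp only [hU, hSup, Function.update_self, Function.update_of_ne him,
              if_neg hmi]
            ring)]
        ring
    simp only [pdT, pdU, sum_if_fin4]
    rw [hξ t]
    ring
  · -- part (c)
    intro i
    have pdV : ∀ m : Fin 4, pd (fun z => V m i t z) m y
        = if m = i then 3 * κ t / (8 * 𝒦 * y i * S)
          else 5 * κ t / (24 * 𝒦 * y i * S) := by
      intro m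
      rw [hSdef]
      by_cases hmi : m = i
      · subst hmi
        rw [if_pos rfl,
          pd_master y hy m _ 0 (-(3 * κ t / (4 * 𝒦))) (fun s hs => by
            simp only [hV, hSup, Function.update_self, eq_self_iff_true, if_true]
            rw [div_self hs.ne']
            ring)]
        ring
      · have him : i ≠ m := fun hh => hmi hh.symm
        rw [if_neg hmi,
          pd_master y hy m _ (5 * κ t / (12 * 𝒦 * y i)) 0 (fun s hs => by
            simp only [hV, hSup, Function.update_self, Function.update_of_ne him,
              if_neg hmi]
            ring)]
        ring
    have pdW : ∀ m : Fin 4, pd (fun z => W m i t z) m y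
        = if m = i then (9 * h t / (4 * 𝒦) - ξ t) / (2 * y i * S)
          else 5 * h t / (8 * 𝒦 * y i * S) := by
      intro m
      rw [hSdef]
      by_cases hmi : m = i
      · subst hmi
        rw [if_pos rfl,
          pd_master y hy m _ 0 (ξ t - 9 * h t / (4 * 𝒦)) (fun s hs => by
            simp only [hW, hSup, Function.update_self, eq_self_iff_true, if_true]
            rw [div_self hs.ne']
            ring)]
        ring
      · have him : i ≠ m := fun hh => hmi hh.symm
        rw [if_neg hmi,
          pd_master y hy m _ (5 * h t / (4 * 𝒦 * y i)) 0 (fun s hs => by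
            simp only [hW, hSup, Function.update_self, Function.update_of_ne him,
              if_neg hmi]
            ring)]
        ring
    simp only [pdV, pdW, sum_if_fin4]
    rw [hξ t]
    ring
end
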